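/- The entropy-regularized min-max problem min_{u∈Δ_n} max_{v∈Δ_m} [uᵀPv + λ∑_a u_a log u_a − λ∑_a v_a log v_a] with λ > 0 has a saddle point (u*, v*), and any saddle point satisfies the QRE fixed-point equations: u*_a = exp(−(Pv*)_a/λ)/∑_{a'} exp(−(Pv*)_{a'}/λ) and v*_a = exp((Pᵀu*)_a/λ)/∑_{a'} exp((Pᵀu*)_{a'}/λ). -/

import Mathlib

open Real Finset Matrix

noncomputable def smax {k : ℕ} (lam : ℝ) (w : Fin k → ℝ) : Fin k → ℝ :=
  fun a => Real.exp (w a / lam) / ∑ a', Real.exp (w a' / lam)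

lemma sexp_pos {k : ℕ} (hk : 0 < k) (lam : ℝ) (w : Fin k → ℝ) :
    0 < ∑ a, Real.exp (w a / lam) := by
  have : Nonempty (Fin k) := ⟨⟨0, hk⟩⟩
  exact Finset.sum_pos (fun a _ => Real.exp_pos _) Finset.univ_nonempty

lemma smax_pos {k : ℕ} (hk : 0 < k) (lam : ℝ) (w : Fin k → ℝ) (a : Fin k) :
    0 < smax lam w a := div_pos (Real.exp_pos _) (sexp_pos hk lam w)

lemma smax_sum {k : ℕ} (hk : 0 < k) (lam : ℝ) (w : Fin k → ℝ) :
    ∑ a, smax lam w a = 1 := by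
  simp only [smax]
  rw [← Finset.sum_div, div_self (sexp_pos hk lam w).ne']

lemma klterm_ge {v s : ℝ} (hv : 0 ≤ v) (hs : 0 < s) :
    v - s ≤ v * Real.log v - v * Real.log s := by
  rcases hv.eq_or_lt with h | h
  · simp only [← h]; simp; linarith
  · have h1 : Real.log (s / v) ≤ s / v - 1 := Real.log_le_sub_one_of_pos (div_pos hs h)
    rw [Real.log_div hs.ne' h.ne'] at h1
    have h3 := mul_le_mul_of_nonneg_left h1 h.le
    have h4 : v * (s / v - 1) = s - v := by field_simp
    nlinarith

lemma klterm_eq {v s : ℝ} (hv : 0 ≤ v) (hs : 0 < s)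
    (h : v * Real.log v - v * Real.log s = v - s) : v = s := by
  rcases hv.eq_or_lt with h0 | h0
  · exfalso; rw [← h0] at h; simp at h; linarith
  · by_contra hne
    have hd : s / v ≠ 1 := by
      intro hh
      have : s = v := by field_simp at hh; linarith
      exact hne this.symm
    have h1 : Real.log (s / v) < s / v - 1 :=
      Real.log_lt_sub_one_of_pos (div_pos hs h0) hd
    rw [Real.log_div hs.ne' h0.ne'] at h1
    have h3 := mul_lt_mul_of_pos_left h1 h0
    have h4 : v * (s / v - 1) = s - v := by field_simp
    nlinarith

lemma gibbs_identity {k : ℕ} (hk : 0 < k) {lam : ℝ} (hlam : 0 < lam) (w v : Fin k → ℝ)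
    (hv1 : ∑ a, v a = 1) :
    (∑ a, w a * v a) - lam * ∑ a, v a * Real.log (v a)
      = lam * Real.log (∑ a, Real.exp (w a / lam))
        - lam * ∑ a, (v a * Real.log (v a) - v a * Real.log (smax lam w a)) := by
  have hS := sexp_pos hk lam w
  have hlog : ∀ a, Real.log (smax lam w a)
      = w a / lam - Real.log (∑ a', Real.exp (w a' / lam)) := fun a => by
    rw [smax, Real.log_div (Real.exp_pos _).ne' hS.ne', Real.log_exp]
  have e1 : ∑ a, v a * Real.log (smax lam w a)
      = (∑ a, w a * v a) / lam - Real.log (∑ a', Real.exp (w a' / lam)) := by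
    simp only [hlog, mul_sub]
    rw [Finset.sum_sub_distrib, ← Finset.sum_mul, hv1, one_mul, Finset.sum_div]
    congr 1
    exact Finset.sum_congr rfl fun a _ => by ring
  rw [Finset.sum_sub_distrib, e1]
  field_simp
  ring

lemma gibbs_D_nonneg {k : ℕ} (hk : 0 < k) (lam : ℝ) (w v : Fin k → ℝ)
    (hv0 : ∀ a, 0 ≤ v a) (hv1 : ∑ a, v a = 1) :
    0 ≤ ∑ a, (v a * Real.log (v a) - v a * Real.log (smax lam w a)) := by
  have h0 : ∑ a, (v a - smax lam w a) = 0 := by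
    rw [Finset.sum_sub_distrib, hv1, smax_sum hk]; ring
  calc (0:ℝ) = ∑ a, (v a - smax lam w a) := h0.symm
    _ ≤ _ := Finset.sum_le_sum fun a _ => klterm_ge (hv0 a) (smax_pos hk lam w a)

lemma gibbs_le {k : ℕ} (hk : 0 < k) {lam : ℝ} (hlam : 0 < lam) (w v : Fin k → ℝ)
    (hv0 : ∀ a, 0 ≤ v a) (hv1 : ∑ a, v a = 1) :
    (∑ a, w a * v a) - lam * ∑ a, v a * Real.log (v a)
      ≤ lam * Real.log (∑ a, Real.exp (w a / lam)) := by
  have hid := gibbs_identity hk hlam w v hv1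
  have hD := gibbs_D_nonneg hk lam w v hv0 hv1
  nlinarith

lemma gibbs_value {k : ℕ} (hk : 0 < k) {lam : ℝ} (hlam : 0 < lam) (w : Fin k → ℝ) :
    (∑ a, w a * smax lam w a) - lam * ∑ a, smax lam w a * Real.log (smax lam w a)
      = lam * Real.log (∑ a, Real.exp (w a / lam)) := by
  have hid := gibbs_identity hk hlam w (smax lam w) (smax_sum hk lam w)
  simpa using hid

lemma gibbs_unique {k : ℕ} (hk : 0 < k) {lam : ℝ} (hlam : 0 < lam) (w v : Fin k → ℝ)
    (hv0 : ∀ a, 0 ≤ v a) (hv1 : ∑ a, v a = 1)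
    (h : (∑ a, w a * v a) - lam * ∑ a, v a * Real.log (v a)
      = lam * Real.log (∑ a, Real.exp (w a / lam))) :
    ∀ a, v a = smax lam w a := by
  have hid := gibbs_identity hk hlam w v hv1
  rw [h] at hid
  have hD : ∑ a, (v a * Real.log (v a) - v a * Real.log (smax lam w a)) = 0 := by
    have hl := hlam.ne'
    have : lam * ∑ a, (v a * Real.log (v a) - v a * Real.log (smax lam w a)) = 0 := by
      linarith
    exact (mul_eq_zero.1 this).resolve_left hl
  have h0 : ∑ a, ((v a * Real.log (v a) - v a * Real.log (smax lam w a))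
      - (v a - smax lam w a)) = 0 := by
    rw [Finset.sum_sub_distrib, hD, Finset.sum_sub_distrib, hv1, smax_sum hk]; ring
  have hall := (Finset.sum_eq_zero_iff_of_nonneg
    (fun a _ => sub_nonneg.2 (klterm_ge (hv0 a) (smax_pos hk lam w a)))).1 h0
  intro a
  have ha := hall a (Finset.mem_univ a)
  exact klterm_eq (hv0 a) (smax_pos hk lam w a) (by linarith [sub_eq_zero.1 ha])
noncomputable def gfun {n m : ℕ} (P : Matrix (Fin n) (Fin m) ℝ) (lam : ℝ) (u : Fin n → ℝ) : ℝ :=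
  lam * Real.log (∑ b, Real.exp ((Pᵀ.mulVec u) b / lam)) + lam * ∑ a, u a * Real.log (u a)

lemma mulVec_comp_continuous {n m : ℕ} (P : Matrix (Fin n) (Fin m) ℝ) (b : Fin m) :
    Continuous fun u : Fin n → ℝ => (Pᵀ.mulVec u) b := by
  simp only [Matrix.mulVec, dotProduct]
  exact continuous_finset_sum _ fun c _ => continuous_const.mul (continuous_apply c)

lemma gfun_continuous {n m : ℕ} (hm : 0 < m) (P : Matrix (Fin n) (Fin m) ℝ)
    {lam : ℝ} : Continuous (gfun P lam) := by
  have hS : Continuous fun u : Fin n → ℝ => ∑ b, Real.exp ((Pᵀ.mulVec u) b / lam) :=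
    continuous_finset_sum _ fun b _ =>
      Real.continuous_exp.comp ((mulVec_comp_continuous P b).div_const lam)
  have hE : Continuous fun u : Fin n → ℝ => ∑ a, u a * Real.log (u a) :=
    continuous_finset_sum _ fun a _ => Real.continuous_mul_log.comp (continuous_apply a)
  exact ((continuous_const.mul (hS.log fun u => (sexp_pos hm lam _).ne'))).add (continuous_const.mul hE)

/-- The entropy-regularized min-max problem over the simplices has a saddle point,
and every saddle point satisfies the QRE (logit) fixed-point equations. -/
theorem qre_saddle_point_exists_and_fixed_point {n m : ℕ} (hn : 0 < n) (hm : 0 < m)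
    (P : Matrix (Fin n) (Fin m) ℝ) (lam : ℝ) (hlam : 0 < lam) :
    let Dn : Set (Fin n → ℝ) := {u | (∀ a, 0 ≤ u a) ∧ ∑ a, u a = 1}
    let Dm : Set (Fin m → ℝ) := {v | (∀ a, 0 ≤ v a) ∧ ∑ a, v a = 1}
    let f : (Fin n → ℝ) → (Fin m → ℝ) → ℝ := fun u v =>
      u ⬝ᵥ P.mulVec v + lam * ∑ a, u a * Real.log (u a) -
        lam * ∑ a, v a * Real.log (v a)
    (∃ us ∈ Dn, ∃ vs ∈ Dm,
        (∀ v ∈ Dm, f us v ≤ f us vs) ∧ (∀ u ∈ Dn, f us vs ≤ f u vs)) ∧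
      (∀ us ∈ Dn, ∀ vs ∈ Dm,
        ((∀ v ∈ Dm, f us v ≤ f us vs) ∧ (∀ u ∈ Dn, f us vs ≤ f u vs)) →
          (∀ a, us a = Real.exp (-(P.mulVec vs) a / lam) /
              ∑ a', Real.exp (-(P.mulVec vs) a' / lam)) ∧
          (∀ b, vs b = Real.exp ((Pᵀ.mulVec us) b / lam) /
              ∑ b', Real.exp ((Pᵀ.mulVec us) b' / lam))) := by
  intro Dn Dm f
  have hfdef0 : ∀ (u : Fin n → ℝ) (v : Fin m → ℝ),
      f u v = u ⬝ᵥ P.mulVec v + lam * ∑ a, u a * Real.log (u a)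
        - lam * ∑ a, v a * Real.log (v a) := fun _ _ => rfl
  have hdot : ∀ (u : Fin n → ℝ) (v : Fin m → ℝ),
      u ⬝ᵥ P.mulVec v = ∑ b, (Pᵀ.mulVec u) b * v b := by
    intro u v
    rw [Matrix.dotProduct_mulVec, ← Matrix.mulVec_transpose]
    rfl
  have hfdef : ∀ (u : Fin n → ℝ) (v : Fin m → ℝ),
      f u v = (∑ b, (Pᵀ.mulVec u) b * v b) + lam * ∑ a, u a * Real.log (u a)
        - lam * ∑ a, v a * Real.log (v a) := by
    intro u v; rw [hfdef0, hdot]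
  -- f u v ≤ gfun P lam u for v in the simplex
  have hfg : ∀ (u : Fin n → ℝ) (v : Fin m → ℝ), (∀ b, 0 ≤ v b) → ∑ b, v b = 1 →
      f u v ≤ gfun P lam u := by
    intro u v hv0 hv1
    have h := gibbs_le hm hlam (Pᵀ.mulVec u) v hv0 hv1
    rw [hfdef]; unfold gfun; linarith
  have hgf : ∀ u : Fin n → ℝ, f u (smax lam (Pᵀ.mulVec u)) = gfun P lam u := by
    intro u
    have h := gibbs_value hm hlam (Pᵀ.mulVec u)
    rw [hfdef]; unfold gfun; linarith
  have hsmem : ∀ u : Fin n → ℝ, smax lam (Pᵀ.mulVec u) ∈ Dm := fun u =>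
    ⟨fun b => (smax_pos hm lam _ b).le, smax_sum hm lam _⟩
  constructor
  · -- existence of a saddle point
    have hne : (stdSimplex ℝ (Fin n)).Nonempty := by
      refine ⟨fun _ => (n : ℝ)⁻¹, fun a => by positivity, ?_⟩
      rw [Finset.sum_const, Finset.card_univ, Fintype.card_fin, nsmul_eq_mul,
        mul_inv_cancel₀ (by exact_mod_cast hn.ne')]
    obtain ⟨us, husD, hmin⟩ := (isCompact_stdSimplex ℝ (Fin n)).exists_isMinOn hne
      (gfun_continuous hm P).continuousOn
    have husDn : us ∈ Dn := husD
    refine ⟨us, husDn, smax lam (Pᵀ.mulVec us), hsmem us, ?_, ?_⟩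
    · intro v hv
      rw [hgf us]
      exact hfg us v hv.1 hv.2
    · intro u hu
      rw [hgf us]
      -- limiting argument along u_t = (1-t) us + t u
      set F : ℝ → ℝ :=
        fun t => f u (smax lam (Pᵀ.mulVec fun a => (1 - t) * us a + t * u a)) with hF
      have hF0 : F 0 = f u (smax lam (Pᵀ.mulVec us)) := by
        simp only [hF, sub_zero, one_mul, zero_mul, add_zero]
      have hbound : ∀ t ∈ Set.Ioc (0:ℝ) 1, gfun P lam us ≤ F t := by
        intro t ht
        set ut : Fin n → ℝ := fun a => (1 - t) * us a + t * u a with hut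
        have hutD : ut ∈ stdSimplex ℝ (Fin n) := by
          constructor
          · intro a
            have := husD.1 a; have := hu.1 a
            have h1 : (0:ℝ) ≤ 1 - t := by linarith [ht.2]
            have h2 : (0:ℝ) ≤ t := ht.1.le
            positivity
          · have : ∑ a, ((1 - t) * us a + t * u a)
                = (1 - t) * ∑ a, us a + t * ∑ a, u a := by
              rw [Finset.sum_add_distrib, Finset.mul_sum, Finset.mul_sum]
            rw [hut, this, husD.2, hu.2]; ring
        set vt : Fin m → ℝ := smax lam (Pᵀ.mulVec ut) with hvt
        have hvtD := hsmem ut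
        have h1 : gfun P lam us ≤ gfun P lam ut := isMinOn_iff.mp hmin ut hutD
        have h2 : gfun P lam ut = f ut vt := (hgf ut).symm
        -- convexity of f in its first argument
        have hdotlin : ut ⬝ᵥ P.mulVec vt
            = (1 - t) * (us ⬝ᵥ P.mulVec vt) + t * (u ⬝ᵥ P.mulVec vt) := by
          simp only [dotProduct, Finset.mul_sum, ← Finset.sum_add_distrib]
          exact Finset.sum_congr rfl fun a _ => by simp only [hut]; ring
        have hent : ∑ a, ut a * Real.log (ut a)
            ≤ (1 - t) * ∑ a, us a * Real.log (us a) + t * ∑ a, u a * Real.log (u a) := by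
          rw [Finset.mul_sum, Finset.mul_sum, ← Finset.sum_add_distrib]
          refine Finset.sum_le_sum fun a _ => ?_
          have hc := Real.convexOn_mul_log.2 (Set.mem_Ici.2 (husD.1 a))
            (Set.mem_Ici.2 (hu.1 a)) (by linarith [ht.2] : (0:ℝ) ≤ 1 - t) ht.1.le (by ring)
          simpa [smul_eq_mul, hut] using hc
        have h3 : f ut vt ≤ (1 - t) * f us vt + t * f u vt := by
          rw [hfdef0, hfdef0, hfdef0, hdotlin]
          have := mul_le_mul_of_nonneg_left hent hlam.le
          nlinarith
        have h4 : f us vt ≤ gfun P lam us := hfg us vt hvtD.1 hvtD.2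
        have h5 : F t = f u vt := rfl
        rw [h5]
        have h6 : (1 - t) * f us vt ≤ (1 - t) * gfun P lam us :=
          mul_le_mul_of_nonneg_left h4 (by linarith [ht.2])
        have key : t * gfun P lam us ≤ t * f u vt := by nlinarith [h1, h2, h3, h6]
        exact le_of_mul_le_mul_left key ht.1
      -- continuity of F and passage to the limit t → 0⁺
      have hutcont : Continuous fun t : ℝ => (fun a => (1 - t) * us a + t * u a : Fin n → ℝ) :=
        continuous_pi fun a =>
          (((continuous_const.sub continuous_id).mul continuous_const).add
            (continuous_id.mul continuous_const))
      have hvtcont : Continuous fun t : ℝ =>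
          smax lam (Pᵀ.mulVec fun a => (1 - t) * us a + t * u a) := by
        refine continuous_pi fun b => ?_
        refine Continuous.div ?_ ?_ ?_
        · exact Real.continuous_exp.comp
            (((mulVec_comp_continuous P b).comp hutcont).div_const lam)
        · exact continuous_finset_sum _ fun b' _ =>
            Real.continuous_exp.comp
              (((mulVec_comp_continuous P b').comp hutcont).div_const lam)
        · exact fun t => (sexp_pos hm lam _).ne'
      have hfucont : Continuous fun v : Fin m → ℝ => f u v := by
        have h1 : Continuous fun v : Fin m → ℝ => u ⬝ᵥ P.mulVec v := by
          simp only [dotProduct, Matrix.mulVec]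
          exact continuous_finset_sum _ fun a _ => continuous_const.mul
            (continuous_finset_sum _ fun b _ => continuous_const.mul (continuous_apply b))
        have h2 : Continuous fun v : Fin m → ℝ => ∑ a, v a * Real.log (v a) :=
          continuous_finset_sum _ fun a _ => Real.continuous_mul_log.comp (continuous_apply a)
        simp only [hfdef0]
        exact (h1.add continuous_const).sub (continuous_const.mul h2)
      have hFcont : Continuous F := hfucont.comp hvtcont
      have htend : Filter.Tendsto F (nhdsWithin 0 (Set.Ioi 0)) (nhds (F 0)) :=
        (hFcont.tendsto 0).mono_left nhdsWithin_le_nhds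
      have hlim := ge_of_tendsto htend (Filter.eventually_of_mem
        (Ioc_mem_nhdsGT_of_mem (by norm_num : (0:ℝ) ∈ Set.Ico 0 1)) hbound)
      rw [hF0] at hlim
      exact hlim
  · -- fixed-point characterization of saddle points
    intro us husD vs hvsD hsad
    obtain ⟨hmax, hminu⟩ := hsad
    constructor
    · -- us is the logit response to vs
      set w : Fin n → ℝ := fun a => -((P.mulVec vs) a) with hw
      have hdotw : ∀ u : Fin n → ℝ, ∑ a, w a * u a = -(u ⬝ᵥ P.mulVec vs) := by
        intro u
        rw [dotProduct, ← Finset.sum_neg_distrib]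
        exact Finset.sum_congr rfl fun a _ => by simp only [hw]; ring
      -- us maximizes the Gibbs objective for w over the simplex
      have husopt : (∑ a, w a * smax lam w a) - lam * ∑ a, smax lam w a * Real.log (smax lam w a)
          ≤ (∑ a, w a * us a) - lam * ∑ a, us a * Real.log (us a) := by
        have hsD : smax lam w ∈ Dn :=
          ⟨fun a => (smax_pos hn lam w a).le, smax_sum hn lam w⟩
        have := hminu (smax lam w) hsD
        rw [hfdef0, hfdef0] at this
        rw [hdotw, hdotw]
        linarith
      have heq : (∑ a, w a * us a) - lam * ∑ a, us a * Real.log (us a)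
          = lam * Real.log (∑ a, Real.exp (w a / lam)) := by
        have h1 := gibbs_le hn hlam w us husD.1 husD.2
        have h2 := gibbs_value hn hlam w
        linarith
      have hfix := gibbs_unique hn hlam w us husD.1 husD.2 heq
      intro a
      rw [hfix a]
      simp only [smax, hw]
    · -- vs is the logit response to Pᵀ us
      have hvsopt : (∑ b, (Pᵀ.mulVec us) b * vs b) - lam * ∑ b, vs b * Real.log (vs b)
          = lam * Real.log (∑ b, Real.exp ((Pᵀ.mulVec us) b / lam)) := by
        have h1 := gibbs_le hm hlam (Pᵀ.mulVec us) vs hvsD.1 hvsD.2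
        have h2 := gibbs_value hm hlam (Pᵀ.mulVec us)
        have h3 := hmax (smax lam (Pᵀ.mulVec us)) (hsmem us)
        rw [hfdef, hfdef] at h3
        have h4 : (∑ b, (Pᵀ.mulVec us) b * smax lam (Pᵀ.mulVec us) b)
            - lam * ∑ b, smax lam (Pᵀ.mulVec us) b * Real.log (smax lam (Pᵀ.mulVec us) b)
            ≤ (∑ b, (Pᵀ.mulVec us) b * vs b) - lam * ∑ b, vs b * Real.log (vs b) := by
          linarith
        linarith
      have hfix := gibbs_unique hm hlam (Pᵀ.mulVec us) vs hvsD.1 hvsD.2 hvsopt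
      intro b
      rw [hfix b]
      simp only [smax]
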